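/- Let X be a Banach space, p ∈ [1,∞), and let U : ℝ → L(X) be a strongly continuous group representation (U(0) = I, U(s+t) = U(s)U(t) for all s,t ∈ ℝ, and s ↦ U(s)x continuous for each x ∈ X) with M := sup_{s∈ℝ} ‖U(s)‖ < ∞. Let μ be a finite complex Borel measure on ℝ and let C ≥ 0 be an L^p(ℝ;X)-convolution bound for μ. Then ‖∫_ℝ U(s)x μ(ds)‖ ≤ M² C ‖x‖ for every x ∈ X. -/

import Mathlib

/-!
Put `I = ∫ h(s) U(s)x dν(s)`. Then `U(-t) I = ∫ h(s) U(s-t)x dν(s)`, and for `|t| ≤ R` this agrees,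
up to `2M‖x‖` times the mass `ε_K` of `|h|` outside `[-K, K]`, with the convolution of `h·ν`
with the truncated orbit `F = 1_{[-(R+K), R+K]} · U(-·)x`. As `‖I‖ ≤ M ‖U(-t) I‖`, the convolution
has modulus at least `(‖I‖ - 2M²‖x‖ε_K)/M` on `[-R, R]`, so its `L^p` norm is at least
`(2R)^{1/p}` times that, while the convolution bound caps it by `C M‖x‖ (2(R+K))^{1/p}`.
Let `R → ∞`, then `K → ∞`.
-/

open MeasureTheory Set Filter Topology
open scoped ENNReal

section ScalarWeightedIntegrals

variable {α E : Type*} [MeasurableSpace α] [NormedAddCommGroup E] [NormedSpace ℂ E]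
  {ν : Measure α} {h : α → ℂ}

lemma MeasureTheory.Integrable.smul_of_norm_le (hh : Integrable h ν) {f : α → E}
    (hf : AEStronglyMeasurable f ν) {B : ℝ} (hfB : ∀ s, ‖f s‖ ≤ B) :
    Integrable (fun s => h s • f s) ν :=
  hh.smul_of_top_left (memLp_top_of_bound hf B (ae_of_all _ hfB))

lemma norm_integral_smul_sub_integral_smul_le_of_eqOn {S : Set α} (hS : MeasurableSet S)
    (hh : Integrable h ν) {f g : α → E} (hf : AEStronglyMeasurable f ν)
    (hg : AEStronglyMeasurable g ν) {B : ℝ} (hfB : ∀ s, ‖f s‖ ≤ B) (hgB : ∀ s, ‖g s‖ ≤ B)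
    (hfg : EqOn f g S) :
    ‖∫ s, h s • f s ∂ν - ∫ s, h s • g s ∂ν‖ ≤ 2 * B * ∫ s in Sᶜ, ‖h s‖ ∂ν := by
  have hbound : ∀ s, ‖h s • f s - h s • g s‖ ≤ Sᶜ.indicator (fun s => ‖h s‖ * (2 * B)) s := by
    intro s
    by_cases hs : s ∈ S
    · simp [hfg hs, hs]
    · rw [indicator_of_mem hs, ← smul_sub, norm_smul]
      gcongr
      linarith [norm_sub_le (f s) (g s), hfB s, hgB s]
  calc ‖∫ s, h s • f s ∂ν - ∫ s, h s • g s ∂ν‖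
      = ‖∫ s, (h s • f s - h s • g s) ∂ν‖ := by
        rw [integral_sub (hh.smul_of_norm_le hf hfB) (hh.smul_of_norm_le hg hgB)]
    _ ≤ ∫ s, Sᶜ.indicator (fun s => ‖h s‖ * (2 * B)) s ∂ν :=
        norm_integral_le_of_norm_le ((hh.norm.mul_const _).indicator hS.compl)
          (ae_of_all _ hbound)
    _ = 2 * B * ∫ s in Sᶜ, ‖h s‖ ∂ν := by
        rw [integral_indicator hS.compl, integral_mul_const, mul_comm]

end ScalarWeightedIntegrals

lemma tendsto_setIntegral_compl_Icc_atTop {E : Type*} [NormedAddCommGroup E] [NormedSpace ℝ E]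
    {ν : Measure ℝ} {f : ℝ → E} (hf : Integrable f ν) :
    Tendsto (fun K => ∫ s in (Icc (-K) K)ᶜ, f s ∂ν) atTop (𝓝 0) := by
  have hanti : Antitone fun K : ℝ => (Icc (-K) K)ᶜ := fun K L hKL =>
    compl_subset_compl.mpr (Icc_subset_Icc (neg_le_neg hKL) hKL)
  have hempty : (⋂ K : ℝ, (Icc (-K) K)ᶜ) = ∅ := by
    refine eq_empty_of_forall_notMem fun s hs => ?_
    exact mem_iInter.mp hs |s| (abs_le.mp le_rfl)
  simpa [hempty] using tendsto_setIntegral_of_antitone (fun K => measurableSet_Icc.compl) hanti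
    ⟨0, hf.integrableOn⟩

lemma ofReal_mul_measure_rpow_le_eLpNorm {α E : Type*} [MeasurableSpace α] {μ : Measure α}
    [NormedAddCommGroup E] {p : ℝ≥0∞} (hp0 : p ≠ 0) (hp : p ≠ ∞) {s : Set α}
    (hs : MeasurableSet s) {G : α → E} {c : ℝ} (hc : ∀ t ∈ s, c ≤ ‖G t‖) :
    ENNReal.ofReal c * μ s ^ (1 / p.toReal) ≤ eLpNorm G p μ := by
  rcases le_or_gt c 0 with hc0 | hc0
  · simp [ENNReal.ofReal_of_nonpos hc0]
  rw [← Real.enorm_of_nonneg hc0.le, ← eLpNorm_indicator_const hs hp0 hp]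
  refine eLpNorm_mono fun t => ?_
  by_cases ht : t ∈ s
  · simpa [ht, abs_of_pos hc0] using hc t ht
  · simp [ht]

def IsLpConvolutionBound (X : Type*) [NormedAddCommGroup X] [NormedSpace ℂ X] (p : ℝ≥0∞)
    (ν : Measure ℝ) (h : ℝ → ℂ) (C : ℝ) : Prop :=
  ∀ F : ℝ → X, MemLp F p volume →
    eLpNorm (fun t => ∫ s, h s • F (t - s) ∂ν) p volume ≤ ENNReal.ofReal C * eLpNorm F p volume

section GroupRepresentation

variable {X : Type*} [NormedAddCommGroup X] [NormedSpace ℂ X] {U : ℝ → X →L[ℂ] X}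

lemma apply_apply_of_add_eq_zero (hU0 : U 0 = 1)
    (hUadd : ∀ s t, U (s + t) = (U s).comp (U t)) {s t : ℝ} (hst : s + t = 0) (v : X) :
    U s (U t v) = v := by
  rw [← ContinuousLinearMap.comp_apply, ← hUadd, hst, hU0, one_apply_eq_self]

lemma map_integral_smul_orbit (hU0 : U 0 = 1) (hUadd : ∀ s t, U (s + t) = (U s).comp (U t))
    {ν : Measure ℝ} (h : ℝ → ℂ) (x : X) (t : ℝ) :
    U (-t) (∫ s, h s • U s x ∂ν) = ∫ s, h s • U (s - t) x ∂ν := by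
  let V : X ≃L[ℂ] X := .equivOfInverse (U (-t)) (U t)
    (apply_apply_of_add_eq_zero hU0 hUadd (add_neg_cancel t))
    (apply_apply_of_add_eq_zero hU0 hUadd (neg_add_cancel t))
  calc U (-t) (∫ s, h s • U s x ∂ν) = V (∫ s, h s • U s x ∂ν) := rfl
    _ = ∫ s, V (h s • U s x) ∂ν := (V.integral_comp_comm _).symm
    _ = ∫ s, h s • U (s - t) x ∂ν := by
        simp only [V, ContinuousLinearEquiv.equivOfInverse_apply, map_smul,
          ← ContinuousLinearMap.comp_apply, ← hUadd, neg_add_eq_sub]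

noncomputable def truncatedOrbit (U : ℝ → X →L[ℂ] X) (x : X) (L : ℝ) : ℝ → X :=
  (Icc (-L) L).indicator fun r => U (-r) x

lemma aestronglyMeasurable_truncatedOrbit {x : X} (hUx : Continuous fun s => U s x)
    {μ : Measure ℝ} (L : ℝ) : AEStronglyMeasurable (truncatedOrbit U x L) μ :=
  (hUx.comp continuous_neg).aestronglyMeasurable.indicator measurableSet_Icc

variable {M : ℝ}

lemma norm_truncatedOrbit_le_indicator (hM : ∀ s, ‖U s‖ ≤ M) (x : X) (L r : ℝ) :
    ‖truncatedOrbit U x L r‖ ≤ (Icc (-L) L).indicator (fun _ => M * ‖x‖) r := by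
  rw [truncatedOrbit, norm_indicator_eq_indicator_norm]
  exact indicator_le_indicator ((U _).le_of_opNorm_le (hM _) x)

lemma norm_truncatedOrbit_le (hM : ∀ s, ‖U s‖ ≤ M) (x : X) (L r : ℝ) :
    ‖truncatedOrbit U x L r‖ ≤ M * ‖x‖ := by
  have hMx : 0 ≤ M * ‖x‖ := mul_nonneg ((norm_nonneg _).trans (hM 0)) (norm_nonneg x)
  exact (norm_truncatedOrbit_le_indicator hM x L r).trans (indicator_le_self' (fun _ _ => hMx) r)

lemma eLpNorm_truncatedOrbit_le (hM : ∀ s, ‖U s‖ ≤ M) (x : X) (L : ℝ) (p : ℝ≥0∞)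
    (μ : Measure ℝ) :
    eLpNorm (truncatedOrbit U x L) p μ
      ≤ ENNReal.ofReal (M * ‖x‖) * μ (Icc (-L) L) ^ (1 / p.toReal) := by
  have hM0 : 0 ≤ M := (norm_nonneg _).trans (hM 0)
  calc eLpNorm (truncatedOrbit U x L) p μ
      ≤ eLpNorm ((Icc (-L) L).indicator fun _ => M * ‖x‖) p μ :=
        eLpNorm_mono_real (norm_truncatedOrbit_le_indicator hM x L)
    _ ≤ _ := by
        rw [← Real.enorm_of_nonneg (by positivity)]
        exact eLpNorm_indicator_const_le _ _

lemma memLp_truncatedOrbit (hM : ∀ s, ‖U s‖ ≤ M) {x : X} (hUx : Continuous fun s => U s x)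
    (L : ℝ) (p : ℝ≥0∞) : MemLp (truncatedOrbit U x L) p volume := by
  refine ⟨aestronglyMeasurable_truncatedOrbit hUx L,
    (eLpNorm_truncatedOrbit_le hM x L p volume).trans_lt ?_⟩
  rw [Real.volume_Icc]
  exact ENNReal.mul_lt_top ENNReal.ofReal_lt_top
    (ENNReal.rpow_lt_top_of_nonneg (by positivity) ENNReal.ofReal_ne_top)

variable {ν : Measure ℝ} {h : ℝ → ℂ}

lemma norm_integral_smul_shifted_orbit_sub_le (hM : ∀ s, ‖U s‖ ≤ M) {x : X}
    (hUx : Continuous fun s => U s x) (hh : Integrable h ν) {R K t : ℝ} (ht : t ∈ Icc (-R) R) :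
    ‖∫ s, h s • U (s - t) x ∂ν - ∫ s, h s • truncatedOrbit U x (R + K) (t - s) ∂ν‖
      ≤ 2 * (M * ‖x‖) * ∫ s in (Icc (-K) K)ᶜ, ‖h s‖ ∂ν := by
  refine norm_integral_smul_sub_integral_smul_le_of_eqOn measurableSet_Icc hh
    (hUx.comp (continuous_id.sub continuous_const)).aestronglyMeasurable
    ((aestronglyMeasurable_truncatedOrbit hUx _).comp_measurable
      (measurable_const.sub measurable_id))
    (fun s => (U _).le_of_opNorm_le (hM _) x) (fun s => norm_truncatedOrbit_le hM x _ _)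
    fun s hs => ?_
  have hts : t - s ∈ Icc (-(R + K)) (R + K) := by
    constructor <;> linarith [ht.1, ht.2, hs.1, hs.2]
  show U (s - t) x = truncatedOrbit U x (R + K) (t - s)
  rw [truncatedOrbit, indicator_of_mem hts, neg_sub]

lemma norm_integral_smul_orbit_sub_tail_le_norm_convolution (hU0 : U 0 = 1)
    (hUadd : ∀ s t, U (s + t) = (U s).comp (U t)) (hM : ∀ s, ‖U s‖ ≤ M) {x : X}
    (hUx : Continuous fun s => U s x) (hh : Integrable h ν) {R K t : ℝ} (ht : t ∈ Icc (-R) R) :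
    ‖∫ s, h s • U s x ∂ν‖ - 2 * M ^ 2 * ‖x‖ * ∫ s in (Icc (-K) K)ᶜ, ‖h s‖ ∂ν
      ≤ ‖M • ∫ s, h s • truncatedOrbit U x (R + K) (t - s) ∂ν‖ := by
  have hM0 : 0 ≤ M := (norm_nonneg _).trans (hM 0)
  set I := ∫ s, h s • U s x ∂ν
  set G := ∫ s, h s • truncatedOrbit U x (R + K) (t - s) ∂ν
  have hshift := norm_integral_smul_shifted_orbit_sub_le (K := K) hM hUx hh ht
  rw [← map_integral_smul_orbit hU0 hUadd] at hshift
  calc ‖I‖ - 2 * M ^ 2 * ‖x‖ * ∫ s in (Icc (-K) K)ᶜ, ‖h s‖ ∂ν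
      = ‖U t (U (-t) I)‖ - M * (2 * (M * ‖x‖) * ∫ s in (Icc (-K) K)ᶜ, ‖h s‖ ∂ν) := by
        rw [apply_apply_of_add_eq_zero hU0 hUadd (add_neg_cancel t)]; ring
    _ ≤ M * ‖U (-t) I‖ - M * ‖U (-t) I - G‖ := by
        gcongr
        exact (U t).le_of_opNorm_le (hM t) _
    _ ≤ ‖M • G‖ := by
        rw [norm_smul, Real.norm_of_nonneg hM0, ← mul_sub]
        gcongr
        linarith [norm_sub_norm_le (U (-t) I) G]

lemma norm_integral_smul_orbit_le_of_isLpConvolutionBound (hU0 : U 0 = 1)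
    (hUadd : ∀ s t, U (s + t) = (U s).comp (U t)) (hM : ∀ s, ‖U s‖ ≤ M) {x : X}
    (hUx : Continuous fun s => U s x) (hh : Integrable h ν) {p : ℝ≥0∞} (hp0 : p ≠ 0)
    (hp : p ≠ ∞) {C : ℝ} (hC : 0 ≤ C) (hCbound : IsLpConvolutionBound X p ν h C)
    {R K : ℝ} (hR : 0 < R) (hK : 0 ≤ K) :
    ‖∫ s, h s • U s x ∂ν‖
      ≤ M ^ 2 * C * ‖x‖ * (1 + K / R) ^ (1 / p.toReal)
        + 2 * M ^ 2 * ‖x‖ * ∫ s in (Icc (-K) K)ᶜ, ‖h s‖ ∂ν := by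
  have hM0 : 0 ≤ M := (norm_nonneg _).trans (hM 0)
  set a := ‖∫ s, h s • U s x ∂ν‖ - 2 * M ^ 2 * ‖x‖ * ∫ s in (Icc (-K) K)ᶜ, ‖h s‖ ∂ν
  set F := truncatedOrbit U x (R + K)
  have hLp : ENNReal.ofReal (a * (2 * R) ^ (1 / p.toReal))
      ≤ ENNReal.ofReal (M * (C * (M * ‖x‖ * (2 * (R + K)) ^ (1 / p.toReal)))) := by
    calc ENNReal.ofReal (a * (2 * R) ^ (1 / p.toReal))
        = ENNReal.ofReal a * volume (Icc (-R) R) ^ (1 / p.toReal) := by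
          rw [Real.volume_Icc, ENNReal.ofReal_mul' (by positivity),
            ENNReal.ofReal_rpow_of_nonneg (by linarith) (by positivity), sub_neg_eq_add, two_mul]
      _ ≤ eLpNorm (M • fun t => ∫ s, h s • F (t - s) ∂ν) p volume :=
          ofReal_mul_measure_rpow_le_eLpNorm hp0 hp measurableSet_Icc fun t ht =>
            norm_integral_smul_orbit_sub_tail_le_norm_convolution hU0 hUadd hM hUx hh ht
      _ ≤ ‖M‖ₑ * (ENNReal.ofReal C * (ENNReal.ofReal (M * ‖x‖)
            * volume (Icc (-(R + K)) (R + K)) ^ (1 / p.toReal))) := by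
          rw [eLpNorm_const_smul]
          gcongr
          exact (hCbound F (memLp_truncatedOrbit hM hUx _ _)).trans
            (by gcongr; exact eLpNorm_truncatedOrbit_le hM x _ _ _)
      _ = _ := by
          rw [Real.volume_Icc, Real.enorm_of_nonneg hM0, sub_neg_eq_add, ← two_mul,
            ENNReal.ofReal_rpow_of_nonneg (by linarith) (by positivity),
            ← ENNReal.ofReal_mul (by positivity), ← ENNReal.ofReal_mul hC,
            ← ENNReal.ofReal_mul hM0]
  have hreal := (ENNReal.ofReal_le_ofReal_iff (by positivity)).mp hLp
  have hsplit : (2 * (R + K)) ^ (1 / p.toReal)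
      = (2 * R) ^ (1 / p.toReal) * (1 + K / R) ^ (1 / p.toReal) := by
    rw [← Real.mul_rpow (by positivity) (by positivity)]
    congr 1
    field_simp
  rw [hsplit] at hreal
  have ha : a ≤ M ^ 2 * C * ‖x‖ * (1 + K / R) ^ (1 / p.toReal) := by
    refine le_of_mul_le_mul_right ?_
      (Real.rpow_pos_of_pos (by positivity : 0 < 2 * R) (1 / p.toReal))
    linarith
  linarith

lemma norm_integral_smul_orbit_le_add_tail (hU0 : U 0 = 1)
    (hUadd : ∀ s t, U (s + t) = (U s).comp (U t)) (hM : ∀ s, ‖U s‖ ≤ M) {x : X}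
    (hUx : Continuous fun s => U s x) (hh : Integrable h ν) {p : ℝ≥0∞} (hp0 : p ≠ 0)
    (hp : p ≠ ∞) {C : ℝ} (hC : 0 ≤ C) (hCbound : IsLpConvolutionBound X p ν h C)
    {K : ℝ} (hK : 0 ≤ K) :
    ‖∫ s, h s • U s x ∂ν‖
      ≤ M ^ 2 * C * ‖x‖ + 2 * M ^ 2 * ‖x‖ * ∫ s in (Icc (-K) K)ᶜ, ‖h s‖ ∂ν := by
  have hratio : Tendsto (fun R => (1 + K / R) ^ (1 / p.toReal)) atTop (𝓝 1) := by
    simpa using ((tendsto_const_nhds.div_atTop tendsto_id).const_add 1).rpow_const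
      (Or.inl (by norm_num))
  have hlim := (hratio.const_mul (M ^ 2 * C * ‖x‖)).add_const
    (2 * M ^ 2 * ‖x‖ * ∫ s in (Icc (-K) K)ᶜ, ‖h s‖ ∂ν)
  rw [mul_one] at hlim
  exact ge_of_tendsto hlim ((eventually_gt_atTop 0).mono fun R hR =>
    norm_integral_smul_orbit_le_of_isLpConvolutionBound hU0 hUadd hM hUx hh hp0 hp hC hCbound
      hR hK)

end GroupRepresentation

theorem transference_bounded_group
    {X : Type*} [NormedAddCommGroup X] [NormedSpace ℂ X]
    (p : ℝ) (hp : 1 ≤ p)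
    (U : ℝ → X →L[ℂ] X)
    (hU0 : U 0 = 1)
    (hUadd : ∀ s t : ℝ, U (s + t) = (U s).comp (U t))
    (hUcont : ∀ x : X, Continuous fun s => U s x)
    (M : ℝ) (hM : ∀ s : ℝ, ‖U s‖ ≤ M)
    (ν : Measure ℝ)
    (h : ℝ → ℂ) (hh : Integrable h ν)
    (C : ℝ) (hC : 0 ≤ C)
    (hCbound : ∀ F : ℝ → X, MemLp F (ENNReal.ofReal p) volume →
      eLpNorm (fun t => ∫ s, h s • F (t - s) ∂ν) (ENNReal.ofReal p) volume
        ≤ ENNReal.ofReal C * eLpNorm F (ENNReal.ofReal p) volume)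
    (x : X) :
    ‖∫ s, h s • U s x ∂ν‖ ≤ M ^ 2 * C * ‖x‖ := by
  have hp0 : ENNReal.ofReal p ≠ 0 := by simpa using zero_lt_one.trans_le hp
  have htail := ((tendsto_setIntegral_compl_Icc_atTop hh.norm).const_mul
    (2 * M ^ 2 * ‖x‖)).const_add (M ^ 2 * C * ‖x‖)
  rw [mul_zero, add_zero] at htail
  exact ge_of_tendsto htail ((eventually_ge_atTop 0).mono fun K hK =>
    norm_integral_smul_orbit_le_add_tail hU0 hUadd hM (hUcont x) hh hp0 ENNReal.ofReal_ne_top hC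
      hCbound hK)
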